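/- Let 𝔛 = (X, {R_i}_{i=0}^d) be a symmetric association scheme whose eigenvalues θ₀, …, θ_d of A₁ are pairwise distinct. Suppose there exists l ∈ {0,1,…,d} such that for each i ∈ {1,…,d}, ∏_{j=1, j≠i}^d (θ₀ − θ_j)/(θ_i − θ_j) = − Q_i(l). Then A₁^h ∘ A_l = 0 for every h with 0 ≤ h ≤ d−1. -/

import Mathlib

/-!
Since `A₁ = ∑ θ_j E_j`, we have `A₁^h = ∑ θ_j^h E_j`, and `E_j ∘ A_l = (Q_j(l)/|X|) A_l`, so
`A₁^h ∘ A_l = (∑_j θ_j^h Q_j(l)/|X|) A_l`. With `Q_0(l) = 1`, the hypothesis turns this sum into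
`θ₀^h − ∑_{i≥1} θ_i^h L_i(θ₀)`, where `L_i` is the Lagrange basis at the nodes `θ₁, …, θ_d`.
For `h < d` the interpolation of `x^h` at these nodes is exact, so the sum vanishes.
-/

open Matrix BigOperators

/-- A symmetric association scheme of class `d` on a finite set `X`, bundled with
its adjacency matrices `A i`, primitive idempotents `E i`, and first and second
eigenmatrices `P`, `Q` (with `P i j = P_i(j)`, `Q i j = Q_i(j)`). -/
structure AssocScheme (X : Type*) [Fintype X] [DecidableEq X] (d : ℕ) where
  A : Fin (d + 1) → Matrix X X ℝ
  E : Fin (d + 1) → Matrix X X ℝ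
  P : Fin (d + 1) → Fin (d + 1) → ℝ
  Q : Fin (d + 1) → Fin (d + 1) → ℝ
  A_entries : ∀ i x y, A i x y = 0 ∨ A i x y = 1
  A_zero : A 0 = 1
  A_ne : ∀ i, A i ≠ 0
  A_sum : ∑ i, A i = Matrix.of fun _ _ => (1 : ℝ)
  A_symm : ∀ i, (A i)ᵀ = A i
  A_mul : ∀ i j, ∃ p : Fin (d + 1) → ℝ, A i * A j = ∑ k, p k • A k
  E_zero : E 0 = ((Fintype.card X : ℝ))⁻¹ • Matrix.of fun _ _ => (1 : ℝ)
  E_sum : ∑ i, E i = 1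
  E_mul : ∀ i j, E i * E j = if i = j then E i else 0
  E_symm : ∀ i, (E i)ᵀ = E i
  A_eq : ∀ i, A i = ∑ j, P i j • E j
  E_eq : ∀ i, E i = ((Fintype.card X : ℝ))⁻¹ • ∑ j, Q i j • A j

namespace AssocScheme

variable {V : Type*} [Fintype V] [DecidableEq V] {d : ℕ} (S : AssocScheme V d)

/-- The eigenvalues `θ_j = P_1(j)` of the first adjacency matrix. -/
def theta (j : Fin (d + 1)) : ℝ := S.P 1 j

/-- `A j` appears in `M` if `M ∘ A j = α • A j` for some nonzero `α`. -/
def Appears (M : Matrix V V ℝ) (j : Fin (d + 1)) : Prop :=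
  ∃ α : ℝ, α ≠ 0 ∧ Matrix.hadamard M (S.A j) = α • S.A j

/-- `N*_h`: indices `j` such that `A j` appears in `A₁^h` but in no lower power. -/
def Nstar (h : ℕ) : Set (Fin (d + 1)) :=
  {j | S.Appears (S.A 1 ^ h) j ∧ ∀ l < h, ¬ S.Appears (S.A 1 ^ l) j}

/-- `S` is a P-polynomial scheme with respect to `A 1`: there is an ordering
`A 0, A 1, A (ξ 2), …, A (ξ d)` and polynomials `v i` of degree `i` with
`v i (A 1) = A (ξ i)`. -/
def IsPPolyWrtA1 : Prop :=
  ∃ ξ : Equiv.Perm (Fin (d + 1)), ξ 0 = 0 ∧ ξ 1 = 1 ∧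
    ∃ v : Fin (d + 1) → Polynomial ℝ,
      ∀ i, (v i).natDegree = (i : ℕ) ∧ Polynomial.aeval (S.A 1) (v i) = S.A (ξ i)

end AssocScheme

namespace Lagrange

open Polynomial Finset

theorem eval_eq_sum_eval_mul_prod_div {F ι : Type*} [Field F] [DecidableEq ι] {s : Finset ι}
    {v : ι → F} (hvs : Set.InjOn v s) {p : F[X]} (hp : p.degree < #s) (x : F) :
    p.eval x = ∑ i ∈ s, p.eval (v i) * ∏ j ∈ s.erase i, (x - v j) / (v i - v j) := by
  conv_lhs => rw [eq_interpolate hvs hp, interpolate_apply]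
  simp [eval_finsetSum, Lagrange.basis, eval_prod, basisDivisor, div_eq_mul_inv, mul_comm]

end Lagrange

namespace AssocScheme

variable {V : Type*} [Fintype V] [DecidableEq V] {d : ℕ} (S : AssocScheme V d)

theorem A_apply_mul_A_apply_of_ne {j k : Fin (d + 1)} (hjk : j ≠ k) (x y : V) :
    S.A j x y * S.A k x y = 0 := by
  have hsum : ∑ i, S.A i x y = 1 := by
    simpa [Matrix.sum_apply] using congrArg (fun M => M x y) S.A_sum
  rcases S.A_entries j x y with hj | hj
  · rw [hj, zero_mul]
  rcases S.A_entries k x y with hk | hk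
  · rw [hk, mul_zero]
  have hle : S.A j x y + S.A k x y ≤ ∑ i, S.A i x y :=
    Finset.add_le_sum (f := fun i => S.A i x y)
      (fun i _ => by rcases S.A_entries i x y with h | h <;> simp [h])
      (Finset.mem_univ j) (Finset.mem_univ k) hjk
  linarith

theorem sum_smul_A_hadamard_A (c : Fin (d + 1) → ℝ) (l : Fin (d + 1)) :
    (∑ j, c j • S.A j) ⊙ S.A l = c l • S.A l := by
  ext x y
  simp only [hadamard_apply, Matrix.sum_apply, Matrix.smul_apply, smul_eq_mul, Finset.sum_mul]
  rw [Finset.sum_eq_single l]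
  · rcases S.A_entries l x y with h | h <;> simp [h]
  · intro j _ hj
    rw [mul_assoc, S.A_apply_mul_A_apply_of_ne hj, mul_zero]
  · simp

theorem sum_smul_E_hadamard_A (c : Fin (d + 1) → ℝ) (l : Fin (d + 1)) :
    (∑ j, c j • S.E j) ⊙ S.A l
      = ((Fintype.card V : ℝ)⁻¹ * ∑ j, c j * S.Q j l) • S.A l := by
  have hE : ∑ j, c j • S.E j
      = ∑ k, ((Fintype.card V : ℝ)⁻¹ * ∑ j, c j * S.Q j k) • S.A k := by
    simp only [S.E_eq, Finset.smul_sum, smul_smul, Finset.mul_sum, Finset.sum_smul]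
    rw [Finset.sum_comm]
    exact Finset.sum_congr rfl fun k _ => Finset.sum_congr rfl fun j _ => by ring_nf
  rw [hE, sum_smul_A_hadamard_A]

theorem A_pow (i : Fin (d + 1)) (h : ℕ) : S.A i ^ h = ∑ j, S.P i j ^ h • S.E j := by
  induction h with
  | zero => simp [S.E_sum]
  | succ n ih =>
    rw [pow_succ, ih, S.A_eq i, Finset.sum_mul]
    simp only [Finset.mul_sum, smul_mul_assoc, mul_smul_comm, S.E_mul, smul_smul, smul_ite,
      smul_zero, Finset.sum_ite_eq, Finset.mem_univ, if_true, pow_succ']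

include S in
theorem card_pos : 0 < Fintype.card V := by
  rcases isEmpty_or_nonempty V with h | h
  · exact absurd (Matrix.ext fun x _ => isEmptyElim x) (S.A_ne 0)
  · exact Fintype.card_pos

theorem Q_zero (l : Fin (d + 1)) : S.Q 0 l = 1 := by
  have hn : (Fintype.card V : ℝ)⁻¹ ≠ 0 := inv_ne_zero (Nat.cast_ne_zero.mpr S.card_pos.ne')
  have hQ : ∑ j, S.Q 0 j • S.A j = ∑ j, (1 : ℝ) • S.A j := by
    have h := S.E_eq 0
    rw [S.E_zero, ← S.A_sum] at h
    simpa using (smul_right_injective _ hn h).symm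
  have h := congrArg (· ⊙ S.A l) hQ
  simp only [sum_smul_A_hadamard_A] at h
  exact smul_left_injective ℝ (S.A_ne l) h

open Polynomial in
theorem sum_theta_pow_mul_Q_eq_zero
    (hθ : Set.InjOn S.theta ↑(Finset.univ.erase (0 : Fin (d + 1)))) {l : Fin (d + 1)}
    (hl : ∀ i : Fin (d + 1), i ≠ 0 →
      (∏ j ∈ (Finset.univ.erase 0).erase i,
        (S.theta 0 - S.theta j) / (S.theta i - S.theta j)) = - S.Q i l)
    {h : ℕ} (hh : h < d) :
    ∑ j, S.theta j ^ h * S.Q j l = 0 := by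
  have hdeg : (X ^ h : ℝ[X]).degree < (Finset.univ.erase (0 : Fin (d + 1))).card := by
    simpa using hh
  have hlag := Lagrange.eval_eq_sum_eval_mul_prod_div hθ hdeg (S.theta 0)
  simp only [eval_pow, eval_X] at hlag
  rw [← Finset.add_sum_erase _ _ (Finset.mem_univ 0), S.Q_zero, mul_one, hlag,
    ← Finset.sum_add_distrib]
  refine Finset.sum_eq_zero fun j hj => ?_
  rw [hl j (Finset.ne_of_mem_erase hj)]
  ring

end AssocScheme

theorem stmt6_general {V : Type*} [Fintype V] [DecidableEq V] {d : ℕ} (S : AssocScheme V d)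
    (hθ : Function.Injective S.theta)
    (l : Fin (d + 1))
    (hl : ∀ i : Fin (d + 1), i ≠ 0 →
      (∏ j ∈ (Finset.univ.erase 0).erase i,
        (S.theta 0 - S.theta j) / (S.theta i - S.theta j)) = - S.Q i l) :
    ∀ h : ℕ, h < d → Matrix.hadamard (S.A 1 ^ h) (S.A l) = 0 := by
  intro h hh
  rw [show S.A 1 ^ h = ∑ j, S.theta j ^ h • S.E j from S.A_pow 1 h, S.sum_smul_E_hadamard_A,
    S.sum_theta_pow_mul_Q_eq_zero hθ.injOn hl hh, mul_zero, zero_smul]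

/-- If the eigenvalues of `A 1` are pairwise distinct and `l` satisfies
`∏_{j≠i}(θ₀−θ_j)/(θ_i−θ_j) = −Q_i(l)` for all `i ∈ {1,…,d}`, then
`A₁^h ∘ A_l = 0` for every `h ≤ d−1`. -/
theorem stmt6 {V : Type*} [Fintype V] [DecidableEq V] {d : ℕ} (S : AssocScheme V d)
    (hd : 1 ≤ d) (hθ : Function.Injective S.theta)
    (l : Fin (d + 1))
    (hl : ∀ i : Fin (d + 1), i ≠ 0 →
      (∏ j ∈ (Finset.univ.erase 0).erase i,
        (S.theta 0 - S.theta j) / (S.theta i - S.theta j)) = - S.Q i l) :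
    ∀ h : ℕ, h < d → Matrix.hadamard (S.A 1 ^ h) (S.A l) = 0 :=
  stmt6_general S hθ l hl
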